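/- With ζ₀,…,ζ_{k-1} the distinct roots of x^k - x^{k-1} - ... - 1, the basis sequences of the k-generalized Fibonacci recurrence satisfy, for 1 ≤ m ≤ k and n ≥ 0: B_{k,k-m}(n) = ∑_{j=0}^{k-1} ((ζ_j^m - 2ζ_j^{m-1} + 1)/((k+1)ζ_j - 2k)) · ζ_j^{n-k+1}. -/

import Mathlib

/-!
The ζ_j are all the roots of P = X^k - ∑_{i<k} X^i, so P = ∏_j (X - ζ_j), and differentiating
(X - 1) P = X^(k+1) - 2 X^k + 1 at ζ_j gives (ζ_j - 1) P'(ζ_j) = ζ_j^(k-1) ((k+1) ζ_j - 2k).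
So, writing T_m(n) for the right-hand side, T_1(n) = ∑_j ζ_j^n / P'(ζ_j), which solves the
recurrence and, by Lagrange interpolation of X^n for n < k, has the initial values of B_{k,k-1}.
For m ≥ 1 we have T_{m+1}(n) = T_m(n+1) - T_1(n), and this operation turns the initial
values of B_{k,k-m} into those of B_{k,k-m-1}: the only new term is T_m(k) = ∑_{i<k} T_m(i) = 1,
which cancels T_1(k-1) = 1.
-/

open Finset Polynomial

def kBonacci (K : Type*) [CommRing K] (k : ℕ) : LinearRecurrence K := ⟨k, fun _ ↦ 1⟩

section Recurrence

variable {K : Type*} [CommRing K] {k : ℕ}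

theorem kBonacci_isSolution_iff {u : ℕ → K} :
    (kBonacci K k).IsSolution u ↔ ∀ n, u (n + k) = ∑ i ∈ range k, u (n + i) := by
  change (∀ n, u (n + k) = ∑ i : Fin k, 1 * u (n + i)) ↔ _
  simp only [one_mul]
  exact forall_congr' fun n ↦ by rw [Fin.sum_univ_eq_sum_range (fun i ↦ u (n + i))]

theorem kBonacci_isSolution_of_eq_sum {u : ℕ → K}
    (h : ∀ n, k ≤ n → u n = ∑ j ∈ range k, u (n - (j + 1))) :
    (kBonacci K k).IsSolution u := by
  refine kBonacci_isSolution_iff.mpr fun n ↦ ?_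
  rw [h _ (Nat.le_add_left k n), ← sum_range_reflect]
  exact sum_congr rfl fun j hj ↦ by grind

theorem kBonacci_eq_of_eqOn {u v : ℕ → K} (hu : (kBonacci K k).IsSolution u)
    (hv : (kBonacci K k).IsSolution v) (h : ∀ n < k, u n = v n) : u = v :=
  (LinearRecurrence.eq_iff_eqOn_range_order _ u v hu hv).mpr fun n hn ↦ h n (mem_range.mp hn)

theorem kBonacci_shift_sub_eq_ite {u f : ℕ → K} {i : ℕ} (hik : i + 1 < k)
    (hu : (kBonacci K k).IsSolution u) (hu₀ : ∀ n < k, u n = if i + 1 = n then 1 else 0)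
    (hf₀ : ∀ n < k, f n = if k - 1 = n then 1 else 0) :
    ∀ n < k, u (n + 1) - f n = if i = n then 1 else 0 := by
  intro n hn
  rcases Nat.lt_or_ge (n + 1) k with hn' | hn'
  · rw [hu₀ _ hn', hf₀ _ hn]
    simp only [add_left_inj, if_neg (show k - 1 ≠ n by omega), sub_zero]
  · have hk : u k = 1 := by
      rw [← zero_add k, kBonacci_isSolution_iff.mp hu 0]
      simp_rw [zero_add]
      rw [sum_congr rfl fun j hj ↦ hu₀ j (mem_range.mp hj), sum_ite_eq,
        if_pos (mem_range.mpr hik)]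
    rw [show n + 1 = k by omega, hk, hf₀ _ hn, if_pos (by omega), if_neg (by omega), sub_self]

theorem kBonacci_charPoly : (kBonacci K k).charPoly = X ^ k - ∑ i ∈ range k, X ^ i := by
  change monomial k 1 - ∑ i : Fin k, monomial i 1 = _
  simp only [monomial_one_right_eq_X_pow, Fin.sum_univ_eq_sum_range (fun i ↦ (X : K[X]) ^ i)]

theorem X_sub_one_mul_X_pow_sub_geom_sum :
    (X - 1) * (X ^ k - ∑ i ∈ range k, X ^ i : K[X]) = X ^ (k + 1) - 2 * X ^ k + 1 := by
  linear_combination -geom_sum_mul (X : K[X]) k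

end Recurrence

section Roots

variable {K : Type*} [Field K] {k : ℕ} {ζ : Fin k → K}

theorem ne_zero_of_pow_eq_geom_sum {z : K} (hk : k ≠ 0) (h : z ^ k = ∑ i ∈ range k, z ^ i) :
    z ≠ 0 := by
  rintro rfl
  simp [zero_pow hk, hk] at h

theorem ne_one_of_pow_eq_geom_sum [CharZero K] {z : K} (hk : k ≠ 1)
    (h : z ^ k = ∑ i ∈ range k, z ^ i) : z ≠ 1 := by
  rintro rfl
  simp only [one_pow, sum_const, card_range, nsmul_eq_mul, mul_one] at h
  exact hk (by exact_mod_cast h.symm)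

theorem nodal_eq_kBonacci_charPoly (hinj : Function.Injective ζ)
    (hroot : ∀ j, ζ j ^ k = ∑ i ∈ range k, ζ j ^ i) :
    Lagrange.nodal univ ζ = (kBonacci K k).charPoly := by
  refine eq_of_degree_le_of_eval_index_eq univ hinj.injOn (by rw [Lagrange.degree_nodal]) ?_
    (by rw [Lagrange.nodal_monic.leadingCoeff, LinearRecurrence.charPoly_monic]) fun j _ ↦ ?_
  · rw [Lagrange.degree_nodal, LinearRecurrence.charPoly_degree_eq_order, card_univ,
      Fintype.card_fin]
    rfl
  · simp [Lagrange.eval_nodal_at_node, kBonacci_charPoly, eval_finsetSum, hroot j]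

theorem sub_one_mul_prod_erase_sub (hinj : Function.Injective ζ)
    (hroot : ∀ j, ζ j ^ k = ∑ i ∈ range k, ζ j ^ i) (j : Fin k) :
    (ζ j - 1) * ∏ i ∈ univ.erase j, (ζ j - ζ i) =
      ζ j ^ (k - 1) * ((k + 1) * ζ j - 2 * k) := by
  have h := congrArg (fun p ↦ (derivative p).eval (ζ j))
    (X_sub_one_mul_X_pow_sub_geom_sum (K := K) (k := k))
  simp only [← kBonacci_charPoly, ← nodal_eq_kBonacci_charPoly hinj hroot] at h
  simp only [derivative_mul, derivative_sub, derivative_X, derivative_one,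
    derivative_X_pow_succ, derivative_X_pow, derivative_ofNat, map_add, map_natCast, map_one,
    eval_add, eval_sub, eval_mul, eval_X, eval_one, eval_natCast, eval_pow, eval_ofNat, mem_univ,
    Lagrange.eval_nodal_at_node, Lagrange.eval_nodal_derivative_eval_node_eq, Lagrange.eval_nodal,
    sub_zero, one_mul, zero_mul, zero_add, add_zero] at h
  rw [h, ← pow_sub_one_mul j.pos.ne' (ζ j)]
  ring

theorem sum_pow_div_prod_erase_sub (hinj : Function.Injective ζ) {r : ℕ} (hr : r < k) :
    ∑ j, ζ j ^ r / ∏ i ∈ univ.erase j, (ζ j - ζ i) = if k - 1 = r then 1 else 0 := by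
  have := Lagrange.coeff_eq_sum (s := univ) hinj.injOn (P := X ^ r) (by simpa using hr)
  simpa [coeff_X_pow, eq_comm] using this.symm

end Roots

section ClosedForm

variable {K : Type*} [Field K] {k : ℕ}

def kBonacciClosedForm (ζ : Fin k → K) (m n : ℕ) : K :=
  ∑ j, (ζ j ^ m - 2 * ζ j ^ (m - 1) + 1) / ((k + 1) * ζ j - 2 * k) * ζ j ^ ((n : ℤ) - k + 1)

variable {ζ : Fin k → K}

theorem zpow_natCast_add_sub_add_one {z : K} (hz : z ≠ 0) (n i k : ℕ) :
    z ^ (((n + i : ℕ) : ℤ) - k + 1) = z ^ ((n : ℤ) - k + 1) * z ^ i := by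
  rw [← zpow_natCast z i, ← zpow_add₀ hz]
  push_cast
  ring_nf

theorem kBonacciClosedForm_isSolution (hroot : ∀ j, ζ j ^ k = ∑ i ∈ range k, ζ j ^ i)
    (m : ℕ) :
    (kBonacci K k).IsSolution (kBonacciClosedForm ζ m) := by
  refine kBonacci_isSolution_iff.mpr fun n ↦ ?_
  simp only [kBonacciClosedForm]
  rw [sum_comm]
  refine sum_congr rfl fun j _ ↦ ?_
  have hz := ne_zero_of_pow_eq_geom_sum j.pos.ne' (hroot j)
  simp only [zpow_natCast_add_sub_add_one hz, hroot j, mul_sum]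

theorem kBonacciClosedForm_one [CharZero K] (hk : 2 ≤ k) (hinj : Function.Injective ζ)
    (hroot : ∀ j, ζ j ^ k = ∑ i ∈ range k, ζ j ^ i) (n : ℕ) :
    kBonacciClosedForm ζ 1 n = ∑ j, ζ j ^ n / ∏ i ∈ univ.erase j, (ζ j - ζ i) := by
  refine sum_congr rfl fun j _ ↦ ?_
  have hz := ne_zero_of_pow_eq_geom_sum j.pos.ne' (hroot j)
  have h1 := sub_ne_zero.mpr (ne_one_of_pow_eq_geom_sum (by omega) (hroot j))
  have hD : ∏ i ∈ univ.erase j, (ζ j - ζ i) ≠ 0 :=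
    prod_ne_zero_iff.mpr fun i hi ↦ sub_ne_zero.mpr (hinj.ne (mem_erase.mp hi).1.symm)
  have hA : (k + 1) * ζ j - 2 * k =
      (ζ j - 1) * (∏ i ∈ univ.erase j, (ζ j - ζ i)) / ζ j ^ (k - 1) := by
    rw [sub_one_mul_prod_erase_sub hinj hroot j]
    field_simp
  have hpow : ζ j ^ ((n : ℤ) - k + 1) = ζ j ^ n / ζ j ^ (k - 1) := by
    rw [← zpow_natCast, ← zpow_natCast, ← zpow_sub₀ hz]
    congr 1
    omega
  rw [hA, hpow]
  field_simp
  ring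

theorem kBonacciClosedForm_add_two (hroot : ∀ j, ζ j ^ k = ∑ i ∈ range k, ζ j ^ i)
    (m n : ℕ) :
    kBonacciClosedForm ζ (m + 2) n =
      kBonacciClosedForm ζ (m + 1) (n + 1) - kBonacciClosedForm ζ 1 n := by
  simp only [kBonacciClosedForm, ← sum_sub_distrib]
  refine sum_congr rfl fun j _ ↦ ?_
  have hz := ne_zero_of_pow_eq_geom_sum j.pos.ne' (hroot j)
  rw [zpow_natCast_add_sub_add_one hz]
  simp only [Nat.add_one_sub_one, Nat.sub_self, pow_zero, pow_succ]
  ring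

theorem kBonacciClosedForm_eq_ite [CharZero K] (hk : 2 ≤ k) (hinj : Function.Injective ζ)
    (hroot : ∀ j, ζ j ^ k = ∑ i ∈ range k, ζ j ^ i) {m : ℕ} (hm1 : 1 ≤ m)
    (hmk : m ≤ k) :
    ∀ n < k, kBonacciClosedForm ζ m n = if k - m = n then 1 else 0 := by
  have base : ∀ n < k, kBonacciClosedForm ζ 1 n = if k - 1 = n then 1 else 0 := fun n hn ↦ by
    rw [kBonacciClosedForm_one hk hinj hroot, sum_pow_div_prod_erase_sub hinj hn]
  induction m, hm1 using Nat.le_induction with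
  | base => exact base
  | succ m hm ih =>
    obtain ⟨m, rfl⟩ : ∃ m', m = m' + 1 := ⟨m - 1, by omega⟩
    intro n hn
    rw [kBonacciClosedForm_add_two hroot]
    refine kBonacci_shift_sub_eq_ite (by omega) (kBonacciClosedForm_isSolution hroot _) ?_ ?_ n hn
    · intro n hn
      rw [ih (by omega) n hn, show k - (m + 2) + 1 = k - (m + 1) by omega]
    · exact base

end ClosedForm

theorem stmt_16 (k : ℕ) (hk : 2 ≤ k) (ζ : Fin k → ℂ)
    (hroot : ∀ j, (ζ j) ^ k = ∑ i ∈ range k, (ζ j) ^ i)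
    (hinj : Function.Injective ζ)
    (B : Fin k → ℕ → ℂ)
    (hinit : ∀ (i : Fin k) (n : ℕ), n < k → B i n = if (i : ℕ) = n then 1 else 0)
    (hrec : ∀ (i : Fin k) (n : ℕ), k ≤ n → B i n = ∑ j ∈ range k, B i (n - (j + 1)))
    (m : ℕ) (hm1 : 1 ≤ m) (hmk : m ≤ k) (n : ℕ) :
    B ⟨k - m, by omega⟩ n = ∑ j : Fin k,
      (((ζ j) ^ m - 2 * (ζ j) ^ (m - 1) + 1) / ((k + 1) * ζ j - 2 * k))
        * (ζ j) ^ ((n : ℤ) - k + 1) := by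
  have hB := kBonacci_isSolution_of_eq_sum (hrec ⟨k - m, by omega⟩)
  have hT := kBonacciClosedForm_isSolution hroot m
  refine congrFun (kBonacci_eq_of_eqOn hB hT fun r hr ↦ ?_) n
  rw [hinit _ r hr, kBonacciClosedForm_eq_ite hk hinj hroot hm1 hmk r hr]
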